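/- Let A=(C,m) be a 3-dimensional toric idealistic cluster and let Q_i be a node of C having exactly one child, Q_k. Then m_i·m_k ≥ Σ_{j→i} m_j² (the sum over all nodes Q_j proximate to Q_i). -/

import Mathlib

open Finset

/-!
Common framework: 3-dimensional toric constellations and toric idealistic clusters.
The edge labels `1, 2, 3` of the paper are encoded as `0, 1, 2 : Fin 3`.
-/

/-- A 3-dimensional toric constellation: a finite rooted tree on nodes `0, …, r−1`
(node `0` the root, every child having larger index than its parent), each node having
at most three children, the edges from a node to its children carrying pairwise
distinct labels in `Fin 3`.  `label j` is the label of the edge from `parent j` to `j`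
(irrelevant for the root). -/
structure ToricConstellation (r : ℕ) where
  parent : Fin r → Fin r
  label : Fin r → Fin 3
  parent_lt : ∀ i : Fin r, 0 < (i : ℕ) → (parent i : ℕ) < (i : ℕ)
  parent_root : ∀ i : Fin r, (i : ℕ) = 0 → parent i = i
  label_distinct : ∀ i j : Fin r, 0 < (i : ℕ) → 0 < (j : ℕ) → i ≠ j →
    parent i = parent j → label i ≠ label j

namespace ToricConstellation

variable {r : ℕ}

/-- The ordered triple of vectors of `ℤ³` attached to a node: the root carries the
standard basis, and the child along the edge labelled `a` of a node with cone
`(u₁,u₂,u₃)` carries the triple obtained by replacing `u_a` with `u₁+u₂+u₃`. -/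
def cone (C : ToricConstellation r) (i : Fin r) : Fin 3 → (Fin 3 → ℤ) :=
  if h : 0 < (i : ℕ) then
    Function.update (cone C (C.parent i)) (C.label i) (∑ a, cone C (C.parent i) a)
  else fun a => Pi.single a 1
termination_by (i : ℕ)
decreasing_by all_goals exact C.parent_lt i h

/-- `v(Q) = u₁ + u₂ + u₃`, the sum of the cone vectors of a node. -/
def v (C : ToricConstellation r) (i : Fin r) : Fin 3 → ℤ := ∑ a, cone C i a

/-- `Prox C j i` means `j → i`, i.e. `Q_j` is proximate to `Q_i`:
`j ≠ i` and `v(Q_i)` is an entry of `cone(Q_j)`. -/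
def Prox (C : ToricConstellation r) (j i : Fin r) : Prop :=
  j ≠ i ∧ ∃ a : Fin 3, cone C j a = v C i

instance (C : ToricConstellation r) (j i : Fin r) : Decidable (C.Prox j i) := by
  unfold Prox; infer_instance

/-- `inChain C i a b j = true` iff `j = Q_i(a, b^t)` for some `t ≥ 0`, i.e. `j` is
reached from `i` by one edge labelled `a` followed by `t` edges labelled `b`. -/
def inChain (C : ToricConstellation r) (i : Fin r) (a b : Fin 3) (j : Fin r) : Bool :=
  if h : 0 < (j : ℕ) then
    (decide (C.parent j = i) && decide (C.label j = a)) ||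
      (decide (C.label j = b) && inChain C i a b (C.parent j))
  else false
termination_by (j : ℕ)
decreasing_by exact C.parent_lt j h

/-- `LinProx C j i` means `j ↠ i`, i.e. `Q_j` is linearly proximate to `Q_i`. -/
def LinProx (C : ToricConstellation r) (j i : Fin r) : Prop :=
  ∃ a b : Fin 3, a ≠ b ∧ inChain C i a b j = true

instance (C : ToricConstellation r) (j i : Fin r) : Decidable (C.LinProx j i) := by
  unfold LinProx; infer_instance

/-- `j` is a child of `i`. -/
def IsChild (C : ToricConstellation r) (j i : Fin r) : Prop :=
  0 < (j : ℕ) ∧ C.parent j = i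

instance (C : ToricConstellation r) (j i : Fin r) : Decidable (C.IsChild j i) := by
  unfold IsChild; infer_instance

/-- The set `S_i` of labels of the edges on the path from the root to `Q_i`. -/
def labelsUnder (C : ToricConstellation r) (i : Fin r) : Finset (Fin 3) :=
  if h : 0 < (i : ℕ) then insert (C.label i) (labelsUnder C (C.parent i)) else ∅
termination_by (i : ℕ)
decreasing_by exact C.parent_lt i h

/-- `i` is a weak ancestor of `j` (`i = j` or `i` a strict ancestor of `j`). -/
def anc (C : ToricConstellation r) (i j : Fin r) : Bool :=
  decide (i = j) || (if h : 0 < (j : ℕ) then anc C i (C.parent j) else false)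
termination_by (j : ℕ)
decreasing_by exact C.parent_lt j h

/-- The set of nodes weakly above `i` (`i` together with its descendants). -/
def weakAbove (C : ToricConstellation r) (i : Fin r) : Finset (Fin r) :=
  univ.filter (fun j => anc C i j = true)

end ToricConstellation

/-- A 3-dimensional toric cluster: a toric constellation together with a positive
integer weight for each node. -/
structure ToricCluster (r : ℕ) extends ToricConstellation r where
  m : Fin r → ℤ
  m_pos : ∀ j, 0 < m j

namespace ToricCluster

open ToricConstellation

variable {r : ℕ}

/-- `M_{Q_i}(a,b) := Σ_{t ≥ 0, Q_i(a,b^t) ∈ C} m_{Q_i(a,b^t)}`. -/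
def M (A : ToricCluster r) (i : Fin r) (a b : Fin 3) : ℤ :=
  ∑ j ∈ univ.filter (fun j => inChain A.toToricConstellation i a b j = true), A.m j

/-- The cluster is idealistic: the linear proximity inequalities
`M_{Q_i}(a,b) + M_{Q_i}(b,a) ≤ m_{Q_i}` hold. -/
def Idealistic (A : ToricCluster r) : Prop :=
  ∀ i : Fin r, ∀ a b : Fin 3, a ≠ b → A.M i a b + A.M i b a ≤ A.m i

/-- The set of nodes `j` proximate to `i` (`j → i`). -/
def proxSet (A : ToricCluster r) (i : Fin r) : Finset (Fin r) :=
  univ.filter (fun j => Prox A.toToricConstellation j i)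

/-- `B_i`: the set of nodes to which `i` is proximate. -/
def Bset (A : ToricCluster r) (i : Fin r) : Finset (Fin r) :=
  univ.filter (fun j => Prox A.toToricConstellation i j)

/-- `A_i`: the children `k` of `i` for which there is no `l` with `i → l` and `k → l`. -/
def Aset (A : ToricCluster r) (i : Fin r) : Finset (Fin r) :=
  univ.filter (fun k => IsChild A.toToricConstellation k i ∧
    ¬ ∃ l, Prox A.toToricConstellation i l ∧ Prox A.toToricConstellation k l)

/-- The Euler characteristic `χ_i = χ(E_i°)`. -/
def chi (A : ToricCluster r) (i : Fin r) : ℤ :=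
  3 + A.m i * (A.m i - 3)
    - ∑ j ∈ A.proxSet i, A.m j * (A.m j - 1)
    + ∑ j ∈ A.proxSet i,
        (A.m j - ∑ k ∈ (A.proxSet i).filter
          (fun k => LinProx A.toToricConstellation k j), A.m k)
    + ∑ j ∈ A.Bset i,
        (A.m i - ∑ k ∈ (A.proxSet j).filter
          (fun k => LinProx A.toToricConstellation k i), A.m k)
    - ((A.Aset i).card : ℤ) - 2 * ((A.Bset i).card : ℤ)
    + (((A.Bset i).card.choose 2 : ℕ) : ℤ)

/-- `D_i = m_i² − Σ_{j→i} m_j²`. -/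
def D (A : ToricCluster r) (i : Fin r) : ℤ :=
  A.m i ^ 2 - ∑ j ∈ A.proxSet i, A.m j ^ 2

/-- `r_{ab} = m_i − M_{Q_i}(a,b) − M_{Q_i}(b,a)`. -/
def rab (A : ToricCluster r) (i : Fin r) (a b : Fin 3) : ℤ :=
  A.m i - A.M i a b - A.M i b a

/-- `R_i = r̂_{12} + r̂_{13} + r̂_{23}`, where `r̂_{ab} = r_{ab}` if the remaining third
label does not appear under `Q_i`, and `r̂_{ab} = 0` otherwise.  (Labels `1,2,3` are
encoded as `0,1,2 : Fin 3`.) -/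
def R (A : ToricCluster r) (i : Fin r) : ℤ :=
  (if (2 : Fin 3) ∉ labelsUnder A.toToricConstellation i then A.rab i 0 1 else 0)
  + (if (1 : Fin 3) ∉ labelsUnder A.toToricConstellation i then A.rab i 0 2 else 0)
  + (if (0 : Fin 3) ∉ labelsUnder A.toToricConstellation i then A.rab i 1 2 else 0)

/-- `T_i = 3 − #A_i − 2·#B_i + (#B_i choose 2)`. -/
def T (A : ToricCluster r) (i : Fin r) : ℤ :=
  3 - ((A.Aset i).card : ℤ) - 2 * ((A.Bset i).card : ℤ)
    + (((A.Bset i).card.choose 2 : ℕ) : ℤ)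

/-- The nodes to which `i` is proximate, of smaller index: the sums in the recursive
definitions of the numerical data range over the nodes to which `i` is proximate,
which are ancestors of `i` and hence have smaller index (making the recursion
well-founded). -/
def anteSet (A : ToricCluster r) (i : Fin r) : Finset (Fin r) :=
  univ.filter (fun j => (j : ℕ) < (i : ℕ) ∧ Prox A.toToricConstellation i j)

/-- The numerical datum `N_i := m_i + Σ_{j : i→j} N_j`. -/
def N (A : ToricCluster r) (i : Fin r) : ℤ :=
  A.m i + ∑ j ∈ (A.anteSet i).attach, N A j.1
termination_by (i : ℕ)
decreasing_by
  have hj := j.2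
  simp only [anteSet, Finset.mem_filter] at hj
  exact hj.2.1

/-- The numerical datum `ν_i := 3 + Σ_{j : i→j} (ν_j − 1)`. -/
def nu (A : ToricCluster r) (i : Fin r) : ℤ :=
  3 + ∑ j ∈ (A.anteSet i).attach, (nu A j.1 - 1)
termination_by (i : ℕ)
decreasing_by
  have hj := j.2
  simp only [anteSet, Finset.mem_filter] at hj
  exact hj.2.1

end ToricCluster

/-!
Let `x` be the label of the edge from `Q_i` to its only child `Q_k`, and `b`, `c` the other two
labels. Along a path from `Q_k` using only `b`- and `c`-edges the entry `u_x = v(Q_i)` of the cone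
is never replaced, and conversely `v(Q_i)` can enter a cone only at `Q_k`, because `v` is
injective: the coordinates of `v(Q_p)` in the basis `cone(Q_q)` are all positive exactly when
`Q_q` lies below `Q_p`. So the nodes proximate to `Q_i` are those reached from `Q_k` by `b`- and
`c`-edges.

Write `L_y(p)` for the weight of the ray from `Q_p` in direction `y`. Over the nodes reached from
`Q_p` by `b`- and `c`-edges, `Σ m_j² ≤ m_p · max(L_b(p), L_c(p))`, by downward induction: a child
`Q_q` contributes at most `m_q · max(L_b(q), L_c(q)) ≤ L_b(q) · L_c(q)`, the `b`-children then
contribute at most `(L_b(p) - m_p) · M_p(b,c)`, the `c`-children at most `M_p(c,b) · (L_c(p) - m_p)`,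
and `M_p(b,c) + M_p(c,b) ≤ m_p`. At `p = k`, `L_b(k) = M_i(x,b) ≤ m_i` and likewise for `c`.
-/

namespace ToricConstellation

variable {r : ℕ}

section Reach

variable (C : ToricConstellation r)

lemma parent_lt_self {i : Fin r} (hi : 0 < (i : ℕ)) : C.parent i < i := C.parent_lt i hi

def ChildIn (S : Set (Fin 3)) (p q : Fin r) : Prop := C.IsChild q p ∧ C.label q ∈ S

def Reach (S : Set (Fin 3)) : Fin r → Fin r → Prop := Relation.ReflTransGen (C.ChildIn S)

variable {C}

lemma ChildIn.lt {S : Set (Fin 3)} {p q : Fin r} (h : C.ChildIn S p q) : p < q :=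
  h.1.2 ▸ C.parent_lt_self h.1.1

lemma ChildIn.eq_of_childIn {S T : Set (Fin 3)} {p p' q : Fin r} (h : C.ChildIn S p q)
    (h' : C.ChildIn T p' q) : p = p' :=
  h.1.2.symm.trans h'.1.2

lemma Reach.le {S : Set (Fin 3)} {p j : Fin r} (h : C.Reach S p j) : p ≤ j := by
  induction h with
  | refl => exact le_rfl
  | tail _ hc ih => exact ih.trans hc.lt.le

lemma Reach.mono {S T : Set (Fin 3)} (hST : S ⊆ T) {p j : Fin r} (h : C.Reach S p j) :
    C.Reach T p j :=
  Relation.ReflTransGen.mono (fun _ _ hc => ⟨hc.1, hST hc.2⟩) _ _ h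

variable (C) in
lemma reach_univ_of_root {q : Fin r} (hq : ¬ 0 < (q : ℕ)) (p : Fin r) :
    C.Reach Set.univ q p := by
  induction p using WellFoundedLT.induction with
  | _ p ih =>
    by_cases hp : 0 < (p : ℕ)
    · exact (ih _ (C.parent_lt_self hp)).tail ⟨⟨hp, rfl⟩, trivial⟩
    · rw [show q = p from Fin.ext (by omega)]
      exact Relation.ReflTransGen.refl

lemma Reach.total {S T : Set (Fin 3)} {q q' j : Fin r} (h : C.Reach S q j)
    (h' : C.Reach T q' j) : C.Reach Set.univ q q' ∨ C.Reach Set.univ q' q := by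
  have hswap := @Relation.reflTransGen_swap _ (C.ChildIn Set.univ)
  exact (Relation.ReflTransGen.total_of_right_unique (fun _ _ _ h h' => h.eq_of_childIn h')
    (hswap.2 (h.mono (Set.subset_univ S))) (hswap.2 (h'.mono (Set.subset_univ T)))).symm.imp
    hswap.1 hswap.1

lemma not_reach_of_siblings {S T S' T' : Set (Fin 3)} {p q q' j : Fin r}
    (hq : C.ChildIn S p q) (hq' : C.ChildIn T p q') (hne : q ≠ q')
    (hj : C.Reach S' q j) (hj' : C.Reach T' q' j) : False := by
  wlog hqq' : C.Reach Set.univ q q' generalizing q q' S T S' T'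
  · exact this hq' hq hne.symm hj' hj ((hj.total hj').resolve_left hqq')
  rcases (Relation.ReflTransGen.cases_tail_iff _ _ _).1 hqq' with rfl | ⟨c, hc, hcq'⟩
  · exact hne rfl
  · exact (((Reach.le hc).trans_eq (hcq'.eq_of_childIn hq')).trans_lt hq.lt).false

variable (C : ToricConstellation r)

open scoped Classical in
noncomputable def reachSet (S : Set (Fin 3)) (p : Fin r) : Finset (Fin r) :=
  univ.filter (C.Reach S p)

open scoped Classical in
noncomputable def childrenIn (S : Set (Fin 3)) (p : Fin r) : Finset (Fin r) :=
  univ.filter (C.ChildIn S p)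

variable {C}

@[simp]
lemma mem_reachSet {S : Set (Fin 3)} {p j : Fin r} : j ∈ C.reachSet S p ↔ C.Reach S p j := by
  simp [reachSet]

@[simp]
lemma mem_childrenIn {S : Set (Fin 3)} {p q : Fin r} :
    q ∈ C.childrenIn S p ↔ C.ChildIn S p q := by
  simp [childrenIn]

variable (C)

lemma reachSet_eq_insert_biUnion (S : Set (Fin 3)) (p : Fin r) :
    C.reachSet S p = insert p ((C.childrenIn S p).biUnion (C.reachSet S)) := by
  ext j
  simp only [mem_reachSet, Finset.mem_insert, Finset.mem_biUnion, mem_childrenIn]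
  exact Relation.ReflTransGen.cases_head_iff.trans (or_congr eq_comm Iff.rfl)

lemma pairwiseDisjoint_reachSet (S T : Set (Fin 3)) (p : Fin r) :
    (C.childrenIn S p : Set (Fin r)).PairwiseDisjoint (C.reachSet T) := by
  intro q hq q' hq' hne
  simp only [Finset.mem_coe, mem_childrenIn] at hq hq'
  exact Finset.disjoint_left.2 fun j hj hj' =>
    not_reach_of_siblings hq hq' hne (mem_reachSet.1 hj) (mem_reachSet.1 hj')

lemma sum_reachSet {M : Type*} [AddCommMonoid M] (S : Set (Fin 3)) (p : Fin r)
    (f : Fin r → M) :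
    ∑ j ∈ C.reachSet S p, f j = f p + ∑ q ∈ C.childrenIn S p, ∑ j ∈ C.reachSet S q, f j := by
  have hp : p ∉ (C.childrenIn S p).biUnion (C.reachSet S) := by
    simp only [Finset.mem_biUnion, mem_childrenIn, mem_reachSet, not_exists, not_and]
    exact fun q hq hqp => (hqp.le.trans_lt hq.lt).false
  rw [C.reachSet_eq_insert_biUnion, Finset.sum_insert hp,
    Finset.sum_biUnion (C.pairwiseDisjoint_reachSet S S p)]

lemma sum_childrenIn_union {M : Type*} [AddCommMonoid M] {S T : Set (Fin 3)}
    (hST : Disjoint S T) (p : Fin r) (f : Fin r → M) :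
    ∑ q ∈ C.childrenIn (S ∪ T) p, f q =
      ∑ q ∈ C.childrenIn S p, f q + ∑ q ∈ C.childrenIn T p, f q := by
  have hunion : C.childrenIn (S ∪ T) p = C.childrenIn S p ∪ C.childrenIn T p := by
    ext q
    simp only [mem_childrenIn, Finset.mem_union, ChildIn, Set.mem_union, and_or_left]
  rw [hunion, Finset.sum_union]
  exact Finset.disjoint_left.2 fun q hS hT =>
    Set.disjoint_left.1 hST (mem_childrenIn.1 hS).2 (mem_childrenIn.1 hT).2

lemma inChain_iff (p : Fin r) (a b : Fin 3) (j : Fin r) :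
    C.inChain p a b j = true ↔ ∃ q, C.ChildIn {a} p q ∧ C.Reach {b} q j := by
  induction j using WellFoundedLT.induction with
  | _ j ih =>
    rw [inChain]
    by_cases hj : 0 < (j : ℕ)
    · simp only [hj, dif_pos, Bool.or_eq_true, Bool.and_eq_true, decide_eq_true_eq,
        ih _ (C.parent_lt_self hj)]
      constructor
      · rintro (⟨hpar, hlab⟩ | ⟨hlab, q, hq, hqj⟩)
        · exact ⟨j, ⟨⟨hj, hpar⟩, hlab⟩, .refl⟩
        · exact ⟨q, hq, hqj.tail ⟨⟨hj, rfl⟩, hlab⟩⟩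
      · rintro ⟨q, hq, hqj⟩
        rcases (Relation.ReflTransGen.cases_tail_iff _ _ _).1 hqj with rfl | ⟨c, hqc, hcj⟩
        · exact Or.inl ⟨hq.1.2, hq.2⟩
        · exact Or.inr ⟨hcj.2, q, hq, hcj.1.2 ▸ hqc⟩
    · simp only [hj, dif_neg, not_false_eq_true, Bool.false_eq_true, false_iff, not_exists,
        not_and]
      intro q hq hqj
      exact hj ((Nat.zero_le _).trans_lt (hq.lt.trans_le (Reach.le hqj)))

end Reach

section Coord

variable (C : ToricConstellation r)

lemma cone_of_pos {j : Fin r} (hj : 0 < (j : ℕ)) :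
    C.cone j = Function.update (C.cone (C.parent j)) (C.label j) (C.v (C.parent j)) := by
  rw [cone, dif_pos hj, v]

lemma cone_of_not_pos {j : Fin r} (hj : ¬ 0 < (j : ℕ)) : C.cone j = fun a => Pi.single a 1 := by
  rw [cone, dif_neg hj]

lemma cone_label {j : Fin r} (hj : 0 < (j : ℕ)) : C.cone j (C.label j) = C.v (C.parent j) := by
  rw [C.cone_of_pos hj, Function.update_self]

lemma cone_of_ne_label {j : Fin r} (hj : 0 < (j : ℕ)) {s : Fin 3} (hs : s ≠ C.label j) :
    C.cone j s = C.cone (C.parent j) s := by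
  rw [C.cone_of_pos hj, Function.update_of_ne hs]

/-- Coordinates in the basis `u` are turned into coordinates in the basis obtained from `u`
by replacing `u a` with `∑ u`. -/
def basisChange (a : Fin 3) : (Fin 3 → ℤ) →+ (Fin 3 → ℤ) where
  toFun y t := if t = a then y t else y t - y a
  map_zero' := by ext t; simp
  map_add' y z := by ext t; simp only [Pi.add_apply]; split_ifs <;> ring

/-- The coordinates of a vector in the basis `cone C j`. -/
def coord (j : Fin r) : (Fin 3 → ℤ) →+ (Fin 3 → ℤ) :=
  if h : 0 < (j : ℕ) then (basisChange (C.label j)).comp (coord (C.parent j))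
  else AddMonoidHom.id _
termination_by (j : ℕ)
decreasing_by exact C.parent_lt j h

lemma coord_of_pos {j : Fin r} (hj : 0 < (j : ℕ)) (y : Fin 3 → ℤ) (t : Fin 3) :
    C.coord j y t = if t = C.label j then C.coord (C.parent j) y t
      else C.coord (C.parent j) y t - C.coord (C.parent j) y (C.label j) := by
  rw [coord, dif_pos hj]
  rfl

lemma coord_of_not_pos {j : Fin r} (hj : ¬ 0 < (j : ℕ)) (y : Fin 3 → ℤ) : C.coord j y = y := by
  rw [coord, dif_neg hj]
  rfl

lemma coord_cone (j : Fin r) (s : Fin 3) : C.coord j (C.cone j s) = Pi.single s 1 := by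
  induction j using WellFoundedLT.induction generalizing s with
  | _ j ih =>
    by_cases hj : 0 < (j : ℕ)
    · have hv : C.coord (C.parent j) (C.v (C.parent j)) = 1 := by
        ext t
        simp [v, map_sum, ih _ (C.parent_lt_self hj), Pi.single_apply]
      ext t
      rw [C.coord_of_pos hj]
      by_cases hs : s = C.label j
      · subst hs
        rw [C.cone_label hj, hv]
        by_cases ht : t = C.label j <;> simp [ht]
      · rw [C.cone_of_ne_label hj hs, ih _ (C.parent_lt_self hj)]
        by_cases ht : t = C.label j <;> simp [ht, Pi.single_apply, Ne.symm hs]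
    · rw [C.cone_of_not_pos hj, C.coord_of_not_pos hj]

lemma coord_v_self (j : Fin r) : C.coord j (C.v j) = 1 := by
  ext t
  simp [v, map_sum, coord_cone, Pi.single_apply]

variable {C}

lemma coord_cone_nonneg {q p : Fin r} (h : C.Reach Set.univ q p) (s : Fin 3) :
    0 ≤ C.coord q (C.cone p s) := by
  induction h generalizing s with
  | refl => simp [coord_cone]
  | @tail p' p _ hc ih =>
    obtain ⟨⟨hp, rfl⟩, -⟩ := hc
    by_cases hs : s = C.label p
    · rw [hs, C.cone_label hp, v, map_sum]
      exact Finset.sum_nonneg fun u _ => ih u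
    · rw [C.cone_of_ne_label hp hs]
      exact ih s

lemma coord_v_pos {q p : Fin r} (h : C.Reach Set.univ q p) (t : Fin 3) :
    0 < C.coord q (C.v p) t := by
  induction h with
  | refl => simp [coord_v_self]
  | @tail p' p hqp' hc ih =>
    obtain ⟨⟨hp, rfl⟩, -⟩ := hc
    have hqp := hqp'.tail ⟨⟨hp, rfl⟩, trivial⟩
    calc 0 < C.coord q (C.cone p (C.label p)) t := by rwa [C.cone_label hp]
      _ ≤ ∑ s, C.coord q (C.cone p s) t :=
        Finset.single_le_sum (fun s _ => coord_cone_nonneg hqp s t) (Finset.mem_univ _)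
      _ = C.coord q (C.v p) t := by simp [v, map_sum]

/-- By induction on `q`: the coordinates of `v p` in `cone (parent q)` are positive too, and if
the path from `parent q` to `p` started at a sibling `q'` of `q`, the coordinate of `v p` at
`label q'` in `cone q` and the one at `label q` in `cone q'` would be opposite numbers. -/
lemma reach_of_coord_v_pos {q p : Fin r} (h : ∀ t, 0 < C.coord q (C.v p) t) :
    C.Reach Set.univ q p := by
  induction q using WellFoundedLT.induction with
  | _ q ih =>
    by_cases hq : 0 < (q : ℕ)
    · have hcoord := fun t => C.coord_of_pos hq (C.v p) t
      have hc : ∀ t, 0 < C.coord (C.parent q) (C.v p) t := by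
        intro t
        have h₁ := hcoord (C.label q) ▸ h (C.label q)
        have h₂ := hcoord t ▸ h t
        split_ifs at h₁ h₂ <;> omega
      rcases (Relation.ReflTransGen.cases_head_iff).1 (ih _ (C.parent_lt_self hq) hc) with
        hpar | ⟨q', hq', hq'p⟩
      · obtain ⟨t, ht⟩ := exists_ne (C.label q)
        have h₁ := h t
        rw [hcoord, if_neg ht, ← hpar, coord_v_self] at h₁
        simp at h₁
      · by_cases hqq' : q' = q
        · exact hqq' ▸ hq'p
        · have hlab := C.label_distinct q' q hq'.1.1 hq hqq' hq'.1.2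
          have h₁ := h (C.label q')
          have h₂ := coord_v_pos hq'p (C.label q)
          rw [hcoord, if_neg hlab] at h₁
          rw [C.coord_of_pos hq'.1.1, if_neg (Ne.symm hlab), hq'.1.2] at h₂
          omega
    · exact C.reach_univ_of_root hq p

variable (C) in
lemma v_injective : Function.Injective C.v := by
  intro p q hpq
  have hqp : C.Reach Set.univ q p :=
    reach_of_coord_v_pos fun t => by simp [hpq, coord_v_self]
  have hpq' : C.Reach Set.univ p q :=
    reach_of_coord_v_pos fun t => by simp [← hpq, coord_v_self]
  exact le_antisymm hpq'.le hqp.le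

end Coord

section Prox

variable {C : ToricConstellation r}

lemma cone_eq_v_of_reach {i k j : Fin r} (hk : C.IsChild k i)
    (h : C.Reach {C.label k}ᶜ k j) : C.cone j (C.label k) = C.v i := by
  induction h with
  | refl => rw [C.cone_label hk.1, hk.2]
  | @tail c j _ hc ih =>
    obtain ⟨⟨hj, rfl⟩, hlab⟩ := hc
    rwa [C.cone_of_ne_label hj (Ne.symm hlab)]

lemma reach_of_cone_eq_v {i k : Fin r} (hk : ∀ q, C.IsChild q i ↔ q = k) (j : Fin r)
    {s : Fin 3} (h : C.cone j s = C.v i) : s = C.label k ∧ C.Reach {C.label k}ᶜ k j := by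
  induction j using WellFoundedLT.induction with
  | _ j ih =>
    by_cases hj : 0 < (j : ℕ)
    · by_cases hs : s = C.label j
      · rw [hs, C.cone_label hj] at h
        obtain rfl : j = k := (hk j).1 ⟨hj, C.v_injective h⟩
        exact ⟨hs, .refl⟩
      · rw [C.cone_of_ne_label hj hs] at h
        obtain ⟨rfl, hreach⟩ := ih _ (C.parent_lt_self hj) h
        exact ⟨rfl, hreach.tail ⟨⟨hj, rfl⟩, Ne.symm hs⟩⟩
    · obtain ⟨t, hts⟩ := exists_ne s
      have hpos := coord_v_pos (C.reach_univ_of_root hj i) t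
      rw [← h, C.coord_of_not_pos hj, C.cone_of_not_pos hj] at hpos
      simp [Pi.single_eq_of_ne hts] at hpos

lemma prox_iff_reach {i k : Fin r} (hk : ∀ q, C.IsChild q i ↔ q = k) (j : Fin r) :
    C.Prox j i ↔ C.Reach {C.label k}ᶜ k j := by
  have hki : C.IsChild k i := (hk k).2 rfl
  constructor
  · rintro ⟨-, s, hs⟩
    exact (reach_of_cone_eq_v hk j hs).2
  · intro h
    refine ⟨fun hji => ?_, _, cone_eq_v_of_reach hki h⟩
    exact (C.parent_lt_self hki.1).not_ge (hki.2 ▸ hji ▸ h.le)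

lemma childrenIn_label_eq_singleton {i k : Fin r} (hk : ∀ q, C.IsChild q i ↔ q = k) :
    C.childrenIn {C.label k} i = {k} := by
  ext q
  simp only [mem_childrenIn, ChildIn, hk, Set.mem_singleton_iff, Finset.mem_singleton]
  exact ⟨And.left, fun h => ⟨h, h ▸ rfl⟩⟩

end Prox

end ToricConstellation

lemma sum_mul_le_sum_mul_sum {ι R : Type*} [CommSemiring R] [PartialOrder R] [IsOrderedRing R]
    (s : Finset ι) {f g : ι → R} (hf : ∀ i ∈ s, 0 ≤ f i) (hg : ∀ i ∈ s, 0 ≤ g i) :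
    ∑ i ∈ s, f i * g i ≤ (∑ i ∈ s, f i) * ∑ i ∈ s, g i := by
  rw [Finset.sum_mul]
  exact Finset.sum_le_sum fun i hi =>
    mul_le_mul_of_nonneg_left (Finset.single_le_sum hg hi) (hf i hi)

namespace ToricCluster

open ToricConstellation

variable {r : ℕ} (A : ToricCluster r)

noncomputable def rayWeight (y : Fin 3) (p : Fin r) : ℤ := ∑ j ∈ A.reachSet {y} p, A.m j

lemma rayWeight_eq (y : Fin 3) (p : Fin r) :
    A.rayWeight y p = A.m p + ∑ q ∈ A.childrenIn {y} p, A.rayWeight y q :=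
  A.sum_reachSet {y} p A.m

lemma rayWeight_nonneg (y : Fin 3) (p : Fin r) : 0 ≤ A.rayWeight y p :=
  Finset.sum_nonneg fun j _ => (A.m_pos j).le

lemma m_le_rayWeight (y : Fin 3) (p : Fin r) : A.m p ≤ A.rayWeight y p :=
  Finset.single_le_sum (fun j _ => (A.m_pos j).le) (mem_reachSet.2 .refl)

lemma M_nonneg (p : Fin r) (a b : Fin 3) : 0 ≤ A.M p a b :=
  Finset.sum_nonneg fun j _ => (A.m_pos j).le

lemma M_eq_sum_rayWeight (p : Fin r) (a b : Fin 3) :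
    A.M p a b = ∑ q ∈ A.childrenIn {a} p, A.rayWeight b q := by
  have hchain : univ.filter (fun j => A.inChain p a b j = true) =
      (A.childrenIn {a} p).biUnion (A.reachSet {b}) := by
    ext j
    simp [inChain_iff]
  rw [M, hchain, Finset.sum_biUnion (A.pairwiseDisjoint_reachSet {a} {b} p)]
  rfl

variable {A}

lemma sum_childrenIn_sum_sq_le (S : Set (Fin 3)) (b c : Fin 3) (p : Fin r)
    (h : ∀ q ∈ A.childrenIn {b} p,
      ∑ j ∈ A.reachSet S q, A.m j ^ 2 ≤ A.m q * max (A.rayWeight b q) (A.rayWeight c q)) :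
    ∑ q ∈ A.childrenIn {b} p, ∑ j ∈ A.reachSet S q, A.m j ^ 2 ≤
      (A.rayWeight b p - A.m p) * A.M p b c := by
  have hq : ∀ q ∈ A.childrenIn {b} p,
      ∑ j ∈ A.reachSet S q, A.m j ^ 2 ≤ A.rayWeight b q * A.rayWeight c q := by
    intro q hq
    rw [← min_mul_max]
    refine (h q hq).trans (mul_le_mul_of_nonneg_right ?_ ?_)
    · exact le_min (A.m_le_rayWeight b q) (A.m_le_rayWeight c q)
    · exact (A.rayWeight_nonneg b q).trans (le_max_left _ _)
  calc _ ≤ ∑ q ∈ A.childrenIn {b} p, A.rayWeight b q * A.rayWeight c q := Finset.sum_le_sum hq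
    _ ≤ (∑ q ∈ A.childrenIn {b} p, A.rayWeight b q) *
          ∑ q ∈ A.childrenIn {b} p, A.rayWeight c q :=
        sum_mul_le_sum_mul_sum _ (fun q _ => A.rayWeight_nonneg b q)
          (fun q _ => A.rayWeight_nonneg c q)
    _ = (A.rayWeight b p - A.m p) * A.M p b c := by
        rw [A.rayWeight_eq b p, M_eq_sum_rayWeight]
        ring

theorem sum_sq_le_m_mul_max_rayWeight (hA : A.Idealistic) {b c : Fin 3} (hbc : b ≠ c)
    (p : Fin r) :
    ∑ j ∈ A.reachSet ({b} ∪ {c}) p, A.m j ^ 2 ≤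
      A.m p * max (A.rayWeight b p) (A.rayWeight c p) := by
  induction p using WellFoundedGT.induction with
  | _ p ih =>
    have hb := sum_childrenIn_sum_sq_le _ b c p fun q hq => ih q (mem_childrenIn.1 hq).lt
    have hc := sum_childrenIn_sum_sq_le _ c b p fun q hq =>
      max_comm (A.rayWeight b q) _ ▸ ih q (mem_childrenIn.1 hq).lt
    have hKb : A.rayWeight b p - A.m p ≤ max (A.rayWeight b p) (A.rayWeight c p) - A.m p := by
      linarith [le_max_left (A.rayWeight b p) (A.rayWeight c p)]
    have hKc : A.rayWeight c p - A.m p ≤ max (A.rayWeight b p) (A.rayWeight c p) - A.m p := by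
      linarith [le_max_right (A.rayWeight b p) (A.rayWeight c p)]
    have hK : 0 ≤ max (A.rayWeight b p) (A.rayWeight c p) - A.m p := by
      linarith [A.m_le_rayWeight b p, le_max_left (A.rayWeight b p) (A.rayWeight c p)]
    rw [A.sum_reachSet, A.sum_childrenIn_union (Set.disjoint_singleton.2 hbc)]
    nlinarith [mul_le_mul_of_nonneg_right hKb (A.M_nonneg p b c),
      mul_le_mul_of_nonneg_right hKc (A.M_nonneg p c b),
      mul_le_mul_of_nonneg_left (hA p b c hbc) hK]

lemma rayWeight_le_of_unique_child (hA : A.Idealistic) {i k : Fin r}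
    (hk : ∀ q, A.IsChild q i ↔ q = k) {y : Fin 3} (hy : y ≠ A.label k) :
    A.rayWeight y k ≤ A.m i := by
  have hM : A.M i (A.label k) y = A.rayWeight y k := by
    rw [M_eq_sum_rayWeight, childrenIn_label_eq_singleton hk, Finset.sum_singleton]
  linarith [hA i _ y hy.symm, A.M_nonneg i y (A.label k)]

end ToricCluster

open ToricConstellation ToricCluster

theorem stmt3 {r : ℕ} (A : ToricCluster r) (hA : A.Idealistic) (i k : Fin r)
    (hk : Finset.univ.filter
        (fun j => IsChild A.toToricConstellation j i) = {k}) :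
    ∑ j ∈ A.proxSet i, A.m j ^ 2 ≤ A.m i * A.m k := by
  have hchild : ∀ q, A.IsChild q i ↔ q = k := by simpa [Finset.ext_iff] using hk
  obtain ⟨b, c, hbc, hb, hc, hlabels⟩ : ∃ b c : Fin 3, b ≠ c ∧ b ≠ A.label k ∧ c ≠ A.label k ∧
      ∀ y, y ≠ A.label k ↔ y = b ∨ y = c := by
    generalize A.label k = x
    revert x
    decide
  have hprox : A.proxSet i = A.reachSet ({b} ∪ {c}) k := by
    have hS : ({A.label k}ᶜ : Set (Fin 3)) = {b} ∪ {c} := by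
      ext y
      simp [hlabels, or_comm]
    ext j
    simp [proxSet, prox_iff_reach hchild, hS]
  calc ∑ j ∈ A.proxSet i, A.m j ^ 2 ≤ A.m k * max (A.rayWeight b k) (A.rayWeight c k) :=
        hprox ▸ sum_sq_le_m_mul_max_rayWeight hA hbc k
    _ ≤ A.m k * A.m i := mul_le_mul_of_nonneg_left
        (max_le (rayWeight_le_of_unique_child hA hchild hb)
          (rayWeight_le_of_unique_child hA hchild hc)) (A.m_pos k).le
    _ = A.m i * A.m k := mul_comm _ _
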